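/- Any two components of the single-link hierarchy are either disjoint or one contains the other (the hierarchy is laminar). -/

import Mathlib

/-- The single-link component of `x` at threshold `r`: the set of points
reachable from `x` through links of length at most `r`. Components of the
single-link hierarchy are exactly these sets (over all thresholds `r`). -/
def slComponent {V : Type*} (w : V → V → ℝ) (r : ℝ) (x : V) : Set V :=
  {z | Relation.EqvGen (fun a b => w a b ≤ r) x z}

/- Components at a fixed threshold are the classes of an equivalence relation, and raising the
threshold coarsens that relation; so a component meeting a component of a higher threshold lies
inside it. -/

section slComponent

variable {V : Type*} (w : V → V → ℝ) {r r' : ℝ} {x y z : V}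

theorem slComponent_mono (h : r ≤ r') : slComponent w r x ⊆ slComponent w r' x :=
  fun _ hz => Relation.EqvGen.mono (fun _ _ hw => hw.trans h) _ _ hz

theorem slComponent_eq_of_mem (hz : z ∈ slComponent w r x) :
    slComponent w r z = slComponent w r x := by
  ext u
  exact ⟨fun hu => hz.trans _ _ _ hu, fun hu => (hz.symm _ _).trans _ _ _ hu⟩

theorem slComponent_subset_of_mem_of_mem (h : r ≤ r') (hx : z ∈ slComponent w r x)
    (hy : z ∈ slComponent w r' y) : slComponent w r x ⊆ slComponent w r' y :=
  calc slComponent w r x = slComponent w r z := (slComponent_eq_of_mem w hx).symm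
    _ ⊆ slComponent w r' z := slComponent_mono w h
    _ = slComponent w r' y := slComponent_eq_of_mem w hy

end slComponent

theorem stmt_9_general {V : Type*} (w : V → V → ℝ)
    (r r' : ℝ) (x y : V) :
    slComponent w r x ⊆ slComponent w r' y ∨
    slComponent w r' y ⊆ slComponent w r x ∨
    Disjoint (slComponent w r x) (slComponent w r' y) := by
  by_cases hd : Disjoint (slComponent w r x) (slComponent w r' y)
  · exact Or.inr (Or.inr hd)
  obtain ⟨z, hx, hy⟩ := Set.not_disjoint_iff.mp hd
  rcases le_total r r' with h | h
  · exact Or.inl (slComponent_subset_of_mem_of_mem w h hx hy)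
  · exact Or.inr (Or.inl (slComponent_subset_of_mem_of_mem w h hy hx))

/-- The single-link hierarchy is laminar: any two of its components are
either nested or disjoint. -/
theorem stmt_9 {V : Type*} (w : V → V → ℝ) (hsymm : ∀ a b, w a b = w b a)
    (r r' : ℝ) (x y : V) :
    slComponent w r x ⊆ slComponent w r' y ∨
    slComponent w r' y ⊆ slComponent w r x ∨
    Disjoint (slComponent w r x) (slComponent w r' y) :=
  stmt_9_general w r r' x y
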